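/- arXiv:math/9911138 — 4 statements merged into one kernel-verified Lean document; each statement's English description precedes it below -/
import Mathlib

section
/- The coproduct of the quantum algebra U_τ(so(2,2)), defined on generators by Δ(H)=1⊗H+H⊗1, Δ(P)=1⊗P+P⊗e^{τH}, Δ(D)=1⊗D+D⊗e^{-τH}, Δ(C1)=1⊗C1+C1⊗e^{-τH}, Δ(K)=1⊗K+K⊗1-τD⊗e^{-τH}P, Δ(C2)=1⊗C2+C2⊗e^{-τH}+2τD⊗e^{-τH}K-τ²D(D+1)⊗e^{-2τH}P, is coassociative on the generators: (Δ⊗id)∘Δ(X) = (id⊗Δ)∘Δ(X) for X ∈ {H, P, D, C1, K, C2}. -/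
/-!
The generators `H, P, D, C1` are skew-primitive, `Δ x = 1 ⊗ x + x ⊗ g` with `g` grouplike, and such
elements are coassociative for formal reasons. For `K` and `C2` both sides are expanded: for `K`
they agree once `e^{-τH} e^{τH} = 1`, while for `C2` they differ by
`-τ² D ⊗ ([D, e^{-τH}] - e^{-2τH} + e^{-τH}) ⊗ e^{-2τH} P`. This vanishes because
`[D, e^{τH}] = e^{τH} - 1`, which is `τ [D, [K, P]] = τ [K, P]`, a case of the Jacobi identity
since `[K, D] = 0` and `[D, P] = P`.
-/

open scoped TensorProduct

section Commutator

variable {A : Type*} [Ring A]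

theorem commutator_commutator_eq_self {d k p : A} (hkd : Commute k d)
    (hdp : d * p - p * d = p) :
    d * (k * p - p * k) - (k * p - p * k) * d = k * p - p * k := by
  calc d * (k * p - p * k) - (k * p - p * k) * d
      = k * (d * p - p * d) - (d * p - p * d) * k + (d * k - k * d) * p
          - p * (d * k - k * d) := by noncomm_ring
    _ = k * p - p * k := by rw [hdp, hkd.eq, sub_self, zero_mul, mul_zero, add_zero, sub_zero]

theorem commutator_eq_neg_mul_commutator_mul {d u v : A} (huv : u * v = 1) (hvu : v * u = 1) :
    d * v - v * d = -(v * (d * u - u * d) * v) := by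
  calc d * v - v * d = -(v * d * (u * v) - (v * u) * d * v) := by
        rw [huv, hvu]; noncomm_ring
    _ = -(v * (d * u - u * d) * v) := by noncomm_ring

theorem commutator_eq_mul_sub_of_commutator_eq_sub_one {d u v : A} (huv : u * v = 1)
    (hvu : v * u = 1) (h : d * u - u * d = u - 1) : d * v - v * d = v * v - v := by
  rw [commutator_eq_neg_mul_commutator_mul huv hvu, h, mul_sub, sub_mul, hvu]
  noncomm_ring

theorem commutator_eq_sub_one_of_smul_commutator_eq {R : Type*} [CommSemiring R] [Algebra R A]
    {d k p u : A} (c : R) (hkd : Commute k d) (hdp : d * p - p * d = p)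
    (hkp : c • (k * p - p * k) = u - 1) : d * u - u * d = u - 1 := by
  calc d * u - u * d = d * (u - 1) - (u - 1) * d := by noncomm_ring
    _ = c • (d * (k * p - p * k) - (k * p - p * k) * d) := by
        rw [← hkp, mul_smul_comm, smul_mul_assoc, smul_sub]
    _ = u - 1 := by rw [commutator_commutator_eq_self hkd hdp, hkp]

end Commutator

section Coassociativity

open TensorProduct

variable {R A : Type*} [CommRing R] [Ring A] [Algebra R A]

def IsCoassocAt (Δ : A →ₐ[R] A ⊗[R] A) (x : A) : Prop :=
  Algebra.TensorProduct.assoc R R R A A A (Algebra.TensorProduct.map Δ (AlgHom.id R A) (Δ x))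
    = Algebra.TensorProduct.map (AlgHom.id R A) Δ (Δ x)

theorem isCoassocAt_of_eq_one_tmul_add_tmul {Δ : A →ₐ[R] A ⊗[R] A} {g x : A}
    (hg : Δ g = g ⊗ₜ g) (hx : Δ x = 1 ⊗ₜ x + x ⊗ₜ g) : IsCoassocAt Δ x := by
  simp only [IsCoassocAt, hx, hg, map_add, Algebra.TensorProduct.map_tmul, map_one,
    AlgHom.id_apply, Algebra.TensorProduct.one_def, add_tmul, tmul_add,
    Algebra.TensorProduct.assoc_tmul]
  abel

theorem isCoassocAt_K {Δ : A →ₐ[R] A ⊗[R] A} {D P K Em Ep : A} (c : R)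
    (hEmEp : Em * Ep = 1) (hΔEm : Δ Em = Em ⊗ₜ Em) (hΔP : Δ P = 1 ⊗ₜ P + P ⊗ₜ Ep)
    (hΔD : Δ D = 1 ⊗ₜ D + D ⊗ₜ Em) (hΔK : Δ K = 1 ⊗ₜ K + K ⊗ₜ 1 - c • (D ⊗ₜ (Em * P))) :
    IsCoassocAt Δ K := by
  simp only [IsCoassocAt, hΔK, hΔD, hΔP, hΔEm, map_add, map_sub, map_smul, map_mul, map_one,
    Algebra.TensorProduct.map_tmul, AlgHom.id_apply, Algebra.TensorProduct.one_def,
    Algebra.TensorProduct.tmul_mul_tmul, mul_add, mul_one, add_tmul, tmul_add, sub_tmul,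
    tmul_sub, ← smul_tmul', tmul_smul, smul_add, Algebra.TensorProduct.assoc_tmul, hEmEp]
  abel

theorem isCoassocAt_C2 {Δ : A →ₐ[R] A ⊗[R] A} {D P K C2 Em Ep : A} (c : R)
    (hEmEp : Em * Ep = 1) (hDEm : D * Em - Em * D = Em * Em - Em)
    (hΔEm : Δ Em = Em ⊗ₜ Em) (hΔP : Δ P = 1 ⊗ₜ P + P ⊗ₜ Ep)
    (hΔD : Δ D = 1 ⊗ₜ D + D ⊗ₜ Em) (hΔK : Δ K = 1 ⊗ₜ K + K ⊗ₜ 1 - c • (D ⊗ₜ (Em * P)))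
    (hΔC2 : Δ C2 = 1 ⊗ₜ C2 + C2 ⊗ₜ Em + (2 * c) • (D ⊗ₜ (Em * K))
      - (c ^ 2) • ((D * (D + 1)) ⊗ₜ (Em * Em * P))) :
    IsCoassocAt Δ C2 := by
  have hDEm' : D * Em = Em * D + Em * Em - Em := by rw [add_sub_assoc, ← hDEm]; abel
  simp only [IsCoassocAt, hΔC2, hΔK, hΔD, hΔP, hΔEm, map_add, map_sub, map_smul, map_mul,
    map_one, Algebra.TensorProduct.map_tmul, AlgHom.id_apply, Algebra.TensorProduct.one_def,
    Algebra.TensorProduct.tmul_mul_tmul, add_mul, mul_add, mul_sub, one_mul, mul_one,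
    mul_smul_comm, mul_assoc, hEmEp, hDEm', add_tmul, tmul_add, sub_tmul, tmul_sub, ← smul_tmul',
    tmul_smul, smul_add, smul_sub, Algebra.TensorProduct.assoc_tmul]
  module

end Coassociativity

/-- `Ep` and `Em` model the power series `e^{τH}` and `e^{-τH}`. -/
theorem Uso22_coproduct_coassociative_general
    (A : Type*) [Ring A] [Algebra ℝ A] (τ : ℝ)
    (H P K D C1 C2 Ep Em : A)
    (hEpEm : Ep * Em = 1) (hEmEp : Em * Ep = 1)
    -- the deformed commutation relations of U_τ(so(2,2))
    (hKP : τ • (K * P - P * K) = Ep - 1)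
    (hDP : D * P - P * D = P)
    (hKD : K * D - D * K = 0)
    -- the coproduct
    (Δ : A →ₐ[ℝ] A ⊗[ℝ] A)
    (hΔH : Δ H = 1 ⊗ₜ[ℝ] H + H ⊗ₜ[ℝ] 1)
    (hΔP : Δ P = 1 ⊗ₜ[ℝ] P + P ⊗ₜ[ℝ] Ep)
    (hΔD : Δ D = 1 ⊗ₜ[ℝ] D + D ⊗ₜ[ℝ] Em)
    (hΔC1 : Δ C1 = 1 ⊗ₜ[ℝ] C1 + C1 ⊗ₜ[ℝ] Em)
    (hΔK : Δ K = 1 ⊗ₜ[ℝ] K + K ⊗ₜ[ℝ] 1 - τ • (D ⊗ₜ[ℝ] (Em * P)))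
    (hΔC2 : Δ C2 = 1 ⊗ₜ[ℝ] C2 + C2 ⊗ₜ[ℝ] Em + (2 * τ) • (D ⊗ₜ[ℝ] (Em * K))
      - (τ ^ 2) • ((D * (D + 1)) ⊗ₜ[ℝ] (Em * Em * P)))
    (hΔEp : Δ Ep = Ep ⊗ₜ[ℝ] Ep) (hΔEm : Δ Em = Em ⊗ₜ[ℝ] Em) :
    ∀ X ∈ ({H, P, D, C1, K, C2} : Set A),
      (Algebra.TensorProduct.assoc ℝ ℝ ℝ A A A)
          ((Algebra.TensorProduct.map Δ (AlgHom.id ℝ A)) (Δ X))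
        = (Algebra.TensorProduct.map (AlgHom.id ℝ A) Δ) (Δ X) := by
  have hDEp : D * Ep - Ep * D = Ep - 1 :=
    commutator_eq_sub_one_of_smul_commutator_eq τ (sub_eq_zero.mp hKD) hDP hKP
  have hDEm : D * Em - Em * D = Em * Em - Em :=
    commutator_eq_mul_sub_of_commutator_eq_sub_one hEpEm hEmEp hDEp
  rintro X (rfl | rfl | rfl | rfl | rfl | rfl)
  · exact isCoassocAt_of_eq_one_tmul_add_tmul (map_one Δ) hΔH
  · exact isCoassocAt_of_eq_one_tmul_add_tmul hΔEp hΔP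
  · exact isCoassocAt_of_eq_one_tmul_add_tmul hΔEm hΔD
  · exact isCoassocAt_of_eq_one_tmul_add_tmul hΔEm hΔC1
  · exact isCoassocAt_K τ hEmEp hΔEm hΔP hΔD hΔK
  · exact isCoassocAt_C2 τ hEmEp hDEm hΔEm hΔP hΔD hΔK hΔC2

/-- Coassociativity of the coproduct of U_τ(so(2,2)) on the generators.
We work in an associative ℝ-algebra `A` (the deformed enveloping algebra) with
generators H, P, K, D, C1, C2 and invertible elements Ep, Em playing the role of
the formal power series e^{τH}, e^{-τH} (so Ep·Em = Em·Ep = 1 and both commute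
with H).  The deformed relations are assumed (with the τ-divided ones written in
multiplied form, e.g. τ[K,P] = e^{τH}-1), and Δ : A → A⊗A is an algebra
homomorphism taking the stated values on the generators, with
Δ(e^{±τH}) = e^{±τH}⊗e^{±τH} (a consequence of H being primitive).
Conclusion: (Δ⊗id)∘Δ = (id⊗Δ)∘Δ on each of H, P, D, C1, K, C2. -/
theorem Uso22_coproduct_coassociative
    (A : Type*) [Ring A] [Algebra ℝ A] (τ : ℝ)
    (H P K D C1 C2 Ep Em : A)
    (hEpEm : Ep * Em = 1) (hEmEp : Em * Ep = 1)
    (hHEp : H * Ep = Ep * H) (hHEm : H * Em = Em * H)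
    -- the deformed commutation relations of U_τ(so(2,2))
    (hKH : K * H - H * K = Em * P)
    (hKP : τ • (K * P - P * K) = Ep - 1)
    (hHP : H * P - P * H = 0)
    (hDH : τ • (D * H - H * D) = 1 - Em)
    (hDC1 : D * C1 - C1 * D = -C1 + τ • (D * D))
    (hHC1 : H * C1 - C1 * H = (-2 : ℝ) • D)
    (hDP : D * P - P * D = P)
    (hDC2 : D * C2 - C2 * D = -C2)
    (hPC2 : P * C2 - C2 * P = (2 : ℝ) • D)
    (hKC1 : K * C1 - C1 * K = C2)
    (hKC2 : K * C2 - C2 * K = C1 - τ • (D * D))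
    (hC1C2 : C1 * C2 - C2 * C1 = -τ • (D * C2 + C2 * D))
    (hHC2 : H * C2 - C2 * H = Em * K + K * Em)
    (hPC1 : P * C1 - C1 * P = (-2 : ℝ) • K - τ • (D * P + P * D))
    (hKD : K * D - D * K = 0)
    -- the coproduct
    (Δ : A →ₐ[ℝ] A ⊗[ℝ] A)
    (hΔH : Δ H = 1 ⊗ₜ[ℝ] H + H ⊗ₜ[ℝ] 1)
    (hΔP : Δ P = 1 ⊗ₜ[ℝ] P + P ⊗ₜ[ℝ] Ep)
    (hΔD : Δ D = 1 ⊗ₜ[ℝ] D + D ⊗ₜ[ℝ] Em)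
    (hΔC1 : Δ C1 = 1 ⊗ₜ[ℝ] C1 + C1 ⊗ₜ[ℝ] Em)
    (hΔK : Δ K = 1 ⊗ₜ[ℝ] K + K ⊗ₜ[ℝ] 1 - τ • (D ⊗ₜ[ℝ] (Em * P)))
    (hΔC2 : Δ C2 = 1 ⊗ₜ[ℝ] C2 + C2 ⊗ₜ[ℝ] Em + (2 * τ) • (D ⊗ₜ[ℝ] (Em * K))
      - (τ ^ 2) • ((D * (D + 1)) ⊗ₜ[ℝ] (Em * Em * P)))
    (hΔEp : Δ Ep = Ep ⊗ₜ[ℝ] Ep) (hΔEm : Δ Em = Em ⊗ₜ[ℝ] Em) :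
    ∀ X ∈ ({H, P, D, C1, K, C2} : Set A),
      (Algebra.TensorProduct.assoc ℝ ℝ ℝ A A A)
          ((Algebra.TensorProduct.map Δ (AlgHom.id ℝ A)) (Δ X))
        = (Algebra.TensorProduct.map (AlgHom.id ℝ A) Δ) (Δ X) :=
  Uso22_coproduct_coassociative_general A τ H P K D C1 C2 Ep Em hEpEm hEmEp hKP hDP hKD Δ hΔH hΔP
    hΔD hΔC1 hΔK hΔC2 hΔEp hΔEm
end

section
/- Let E_τ = ∂²/∂x² - ((e^{τ∂_t}-1)/τ)² be the time-discretized wave operator. In the realization H=∂_t, P=∂_x, K = -x(e^{τ∂_t}-1)/τ - t e^{-τ∂_t}∂_x, the operator E_τ commutes with H, P, and K: [E_τ, H]=0, [E_τ, P]=0, [E_τ, K]=0. -/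
open Filter Topology

/-- Partial derivative in x. -/
noncomputable def pdx (f : ℝ → ℝ → ℝ) : ℝ → ℝ → ℝ := fun x t => deriv (fun y => f y t) x

/-- Partial derivative in t. -/
noncomputable def pdt (f : ℝ → ℝ → ℝ) : ℝ → ℝ → ℝ := fun x t => deriv (fun s => f x s) t

/-- Smoothness of a function Φ(x,t) on ℝ². -/
def Smooth2 (f : ℝ → ℝ → ℝ) : Prop := ContDiff ℝ (⊤ : ℕ∞) (fun p : ℝ × ℝ => f p.1 p.2)

/-- H = ∂_t. -/
noncomputable def opH (f : ℝ → ℝ → ℝ) : ℝ → ℝ → ℝ := pdt f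
/-- P = ∂_x. -/
noncomputable def opP (f : ℝ → ℝ → ℝ) : ℝ → ℝ → ℝ := pdx f

/-- K_τ = -x(e^{τ∂_t}-1)/τ - t e^{-τ∂_t}∂_x, with e^{aτ∂_t} the time shift by aτ. -/
noncomputable def opKt (τ : ℝ) (f : ℝ → ℝ → ℝ) : ℝ → ℝ → ℝ :=
  fun x t => -x * ((f x (t + τ) - f x t) / τ) - t * pdx f x (t - τ)

/-- D_τ = -x∂_x - t(1-e^{-τ∂_t})/τ. -/
noncomputable def opDt (τ : ℝ) (f : ℝ → ℝ → ℝ) : ℝ → ℝ → ℝ :=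
  fun x t => -x * pdx f x t - t * ((f x t - f x (t - τ)) / τ)

/-- C1_τ = (x² + t²e^{-τ∂_t})(e^{τ∂_t}-1)/τ + 2xt∂_x + τx∂_x + τx²∂²_x. -/
noncomputable def opC1t (τ : ℝ) (f : ℝ → ℝ → ℝ) : ℝ → ℝ → ℝ :=
  fun x t => x ^ 2 * ((f x (t + τ) - f x t) / τ) + t ^ 2 * ((f x t - f x (t - τ)) / τ)
    + 2 * x * t * pdx f x t + τ * x * pdx f x t + τ * x ^ 2 * pdx (pdx f) x t

/-- C2_τ = -(x² + t²e^{-2τ∂_t})∂_x - 2xt(1-e^{-τ∂_t})/τ + τt e^{-2τ∂_t}∂_x. -/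
noncomputable def opC2t (τ : ℝ) (f : ℝ → ℝ → ℝ) : ℝ → ℝ → ℝ :=
  fun x t => -(x ^ 2) * pdx f x t - t ^ 2 * pdx f x (t - 2 * τ)
    - 2 * x * t * ((f x t - f x (t - τ)) / τ) + τ * t * pdx f x (t - 2 * τ)

/-- The time-discretized wave operator E_τ = ∂²_x - ((e^{τ∂_t}-1)/τ)². -/
noncomputable def opEt (τ : ℝ) (f : ℝ → ℝ → ℝ) : ℝ → ℝ → ℝ :=
  fun x t => pdx (pdx f) x t - (f x (t + 2 * τ) - 2 * f x (t + τ) + f x t) / τ ^ 2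

namespace Smooth2
variable {f : ℝ → ℝ → ℝ}

theorem pdx_eq (hf : Smooth2 f) (x t : ℝ) :
    pdx f x t = fderiv ℝ (fun p : ℝ × ℝ => f p.1 p.2) (x, t) (1, 0) := by
  have h1 : HasFDerivAt (fun p : ℝ × ℝ => f p.1 p.2)
      (fderiv ℝ (fun p : ℝ × ℝ => f p.1 p.2) (x, t)) (x, t) :=
    (hf.differentiable (by simp) (x, t)).hasFDerivAt
  have h2 := h1.comp x (hasFDerivAt_prodMk_left (𝕜 := ℝ) x t)
  have h3 := h2.hasDerivAt
  simpa [pdx, pdt, Function.comp_def] using h3.deriv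

theorem pdt_eq (hf : Smooth2 f) (x t : ℝ) :
    pdt f x t = fderiv ℝ (fun p : ℝ × ℝ => f p.1 p.2) (x, t) (0, 1) := by
  have h1 : HasFDerivAt (fun p : ℝ × ℝ => f p.1 p.2)
      (fderiv ℝ (fun p : ℝ × ℝ => f p.1 p.2) (x, t)) (x, t) :=
    (hf.differentiable (by simp) (x, t)).hasFDerivAt
  have h2 := h1.comp t (hasFDerivAt_prodMk_right (𝕜 := ℝ) x t)
  have h3 := h2.hasDerivAt
  simpa [pdx, pdt, Function.comp_def] using h3.deriv

theorem fderiv_smooth (hf : Smooth2 f) :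
    ContDiff ℝ (⊤ : ℕ∞) (fderiv ℝ (fun p : ℝ × ℝ => f p.1 p.2)) :=
  hf.fderiv_right (by exact_mod_cast le_top)

theorem dx (hf : Smooth2 f) : Smooth2 (pdx f) := by
  have : (fun p : ℝ × ℝ => pdx f p.1 p.2)
      = fun p : ℝ × ℝ => fderiv ℝ (fun p : ℝ × ℝ => f p.1 p.2) p ((1 : ℝ), (0 : ℝ)) := by
    funext p; exact hf.pdx_eq p.1 p.2
  rw [Smooth2, this]
  exact (hf.fderiv_smooth).clm_apply contDiff_const

theorem dt (hf : Smooth2 f) : Smooth2 (pdt f) := by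
  have : (fun p : ℝ × ℝ => pdt f p.1 p.2)
      = fun p : ℝ × ℝ => fderiv ℝ (fun p : ℝ × ℝ => f p.1 p.2) p ((0 : ℝ), (1 : ℝ)) := by
    funext p; exact hf.pdt_eq p.1 p.2
  rw [Smooth2, this]
  exact (hf.fderiv_smooth).clm_apply contDiff_const

theorem hasDerivAt_x (hf : Smooth2 f) (x t : ℝ) :
    HasDerivAt (fun y => f y t) (pdx f x t) x := by
  have h : DifferentiableAt ℝ (fun y => f y t) x :=
    ((hf.differentiable (by simp)).comp
      ((differentiable_id.prodMk (differentiable_const t)))).differentiableAt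
  exact h.hasDerivAt

theorem hasDerivAt_t (hf : Smooth2 f) (x t : ℝ) :
    HasDerivAt (fun s => f x s) (pdt f x t) t := by
  have h : DifferentiableAt ℝ (fun s => f x s) t :=
    ((hf.differentiable (by simp)).comp
      (((differentiable_const x).prodMk differentiable_id))).differentiableAt
  exact h.hasDerivAt

theorem swap (hf : Smooth2 f) : pdt (pdx f) = pdx (pdt f) := by
  funext x t
  set F := fun p : ℝ × ℝ => f p.1 p.2 with hF
  have hfd : ∀ v : ℝ × ℝ,
      fderiv ℝ (fun p : ℝ × ℝ => fderiv ℝ F p v) (x, t)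
        = (fderiv ℝ (fderiv ℝ F) (x, t)).flip v := by
    intro v
    have hc : DifferentiableAt ℝ (fderiv ℝ F) (x, t) :=
      ((hf.fderiv_smooth).differentiable (by simp)).differentiableAt
    rw [fderiv_clm_apply hc (differentiableAt_const v)]
    simp
  have hsym := second_derivative_symmetric (f := F) (f' := fderiv ℝ F)
    (f'' := fderiv ℝ (fderiv ℝ F) (x, t)) (x := (x, t))
    (fun y => (hf.differentiable (by simp) y).hasFDerivAt)
    (((hf.fderiv_smooth).differentiable (by simp)).differentiableAt.hasFDerivAt)
  have h1 := (hf.dx).pdt_eq x t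
  have h2 := (hf.dt).pdx_eq x t
  rw [h1, h2]
  have e1 : (fun p : ℝ × ℝ => pdx f p.1 p.2) = fun p : ℝ × ℝ => fderiv ℝ F p (1, 0) := by
    funext p; exact hf.pdx_eq p.1 p.2
  have e2 : (fun p : ℝ × ℝ => pdt f p.1 p.2) = fun p : ℝ × ℝ => fderiv ℝ F p (0, 1) := by
    funext p; exact hf.pdt_eq p.1 p.2
  rw [e1, e2, hfd, hfd]
  simpa using (hsym (1, 0) (0, 1)).symm

end Smooth2

namespace Smooth2
variable {f : ℝ → ℝ → ℝ} {τ : ℝ}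

theorem hasDerivAt_t_shift (hf : Smooth2 f) (x t c : ℝ) :
    HasDerivAt (fun s => f x (s + c)) (pdt f x (t + c)) t := by
  simpa [Function.comp_def] using (hf.hasDerivAt_t x (t + c)).comp t ((hasDerivAt_id t).add_const c)

theorem pdx_opEt (hf : Smooth2 f) (x t : ℝ) :
    pdx (opEt τ f) x t = pdx (pdx (pdx f)) x t
      - (pdx f x (t + 2 * τ) - 2 * pdx f x (t + τ) + pdx f x t) / τ ^ 2 := by
  have h := (hf.dx.dx.hasDerivAt_x x t).sub
    ((((hf.hasDerivAt_x x (t + 2 * τ)).sub ((hf.hasDerivAt_x x (t + τ)).const_mul 2)).add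
      (hf.hasDerivAt_x x t)).div_const (τ ^ 2))
  simpa [opEt, pdx, Pi.sub_def] using h.deriv

theorem pdx_opKt (hf : Smooth2 f) (x t : ℝ) :
    pdx (opKt τ f) x t = -((f x (t + τ) - f x t) / τ)
      - x * ((pdx f x (t + τ) - pdx f x t) / τ) - t * pdx (pdx f) x (t - τ) := by
  have h : HasDerivAt (fun y => -y * ((f y (t + τ) - f y t) / τ) - t * pdx f y (t - τ))
      (-((f x (t + τ) - f x t) / τ) - x * ((pdx f x (t + τ) - pdx f x t) / τ)
        - t * pdx (pdx f) x (t - τ)) x := by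
    have h0 := (((hasDerivAt_id x).neg.mul
        (((hf.hasDerivAt_x x (t + τ)).sub (hf.hasDerivAt_x x t)).div_const τ)).sub
      ((hf.dx.hasDerivAt_x x (t - τ)).const_mul t))
    simp only [Pi.sub_def, Pi.mul_def, Pi.neg_def, id_eq] at h0
    refine h0.congr_deriv ?_
    ring
  show deriv (fun y => opKt τ f y t) x = _
  simp only [opKt]
  exact h.deriv

theorem pdx2_opKt (hf : Smooth2 f) (x t : ℝ) :
    pdx (pdx (opKt τ f)) x t = -(2 * ((pdx f x (t + τ) - pdx f x t) / τ))
      - x * ((pdx (pdx f) x (t + τ) - pdx (pdx f) x t) / τ)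
      - t * pdx (pdx (pdx f)) x (t - τ) := by
  have e : pdx (opKt τ f) = fun x t => -((f x (t + τ) - f x t) / τ)
      - x * ((pdx f x (t + τ) - pdx f x t) / τ) - t * pdx (pdx f) x (t - τ) := by
    funext x t; exact hf.pdx_opKt x t
  rw [e]
  have h : HasDerivAt (fun y => -((f y (t + τ) - f y t) / τ)
      - y * ((pdx f y (t + τ) - pdx f y t) / τ) - t * pdx (pdx f) y (t - τ))
      (-(2 * ((pdx f x (t + τ) - pdx f x t) / τ))
        - x * ((pdx (pdx f) x (t + τ) - pdx (pdx f) x t) / τ)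
        - t * pdx (pdx (pdx f)) x (t - τ)) x := by
    have h0 := (((((hf.hasDerivAt_x x (t + τ)).sub (hf.hasDerivAt_x x t)).div_const τ).neg.sub
        ((hasDerivAt_id x).mul
          (((hf.dx.hasDerivAt_x x (t + τ)).sub (hf.dx.hasDerivAt_x x t)).div_const τ))).sub
      ((hf.dx.dx.hasDerivAt_x x (t - τ)).const_mul t))
    simp only [Pi.sub_def, Pi.mul_def, Pi.neg_def, id_eq] at h0
    refine h0.congr_deriv ?_
    ring
  show deriv (fun y => _) x = _
  exact h.deriv

end Smooth2


/-- The discrete wave operator E_τ commutes with H = ∂_t, P = ∂_x and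
K_τ = -x(e^{τ∂_t}-1)/τ - t e^{-τ∂_t}∂_x : [E_τ,H] = [E_τ,P] = [E_τ,K] = 0. -/
theorem discrete_wave_commutes_HPK (τ : ℝ) (hτ : τ ≠ 0) (f : ℝ → ℝ → ℝ) (hf : Smooth2 f) :
    (opEt τ (opH f) - opH (opEt τ f) = 0) ∧
    (opEt τ (opP f) - opP (opEt τ f) = 0) ∧
    (opEt τ (opKt τ f) - opKt τ (opEt τ f) = 0) := by
  refine ⟨?_, ?_, ?_⟩
  · rw [sub_eq_zero]; funext x t
    have hH : opH (opEt τ f) x t = pdt (pdx (pdx f)) x t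
        - (pdt f x (t + 2 * τ) - 2 * pdt f x (t + τ) + pdt f x t) / τ ^ 2 := by
      have h := (hf.dx.dx.hasDerivAt_t x t).sub
        ((((hf.hasDerivAt_t_shift x t (2 * τ)).sub
            ((hf.hasDerivAt_t_shift x t τ).const_mul 2)).add
          (hf.hasDerivAt_t x t)).div_const (τ ^ 2))
      show deriv (fun s => opEt τ f x s) t = _
      simp only [opEt]
      exact h.deriv
    have hswap : pdx (pdx (pdt f)) = pdt (pdx (pdx f)) := by
      rw [← hf.swap, (hf.dx).swap]
    have e1 : opEt τ (opH f) x t = pdx (pdx (pdt f)) x t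
        - (pdt f x (t + 2 * τ) - 2 * pdt f x (t + τ) + pdt f x t) / τ ^ 2 := rfl
    rw [e1, hH, hswap]
  · rw [sub_eq_zero]; funext x t
    rw [show opP (opEt τ f) x t = pdx (opEt τ f) x t from rfl, hf.pdx_opEt x t]
    rfl
  · rw [sub_eq_zero]; funext x t
    have hK2 := hf.pdx2_opKt (τ := τ) x t
    have hEx := hf.pdx_opEt (τ := τ) x (t - τ)
    have e1 : opEt τ (opKt τ f) x t = pdx (pdx (opKt τ f)) x t
        - (opKt τ f x (t + 2 * τ) - 2 * opKt τ f x (t + τ) + opKt τ f x t) / τ ^ 2 := rfl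
    have e2 : opKt τ (opEt τ f) x t = -x * ((opEt τ f x (t + τ) - opEt τ f x t) / τ)
        - t * pdx (opEt τ f) x (t - τ) := rfl
    rw [e1, e2, hK2, hEx]
    simp only [opKt, opEt]
    field_simp
    ring_nf
end

section
/- With D = -x∂_x - t(1-e^{-τ∂_t})/τ and E_τ = ∂²_x - ((e^{τ∂_t}-1)/τ)², the operator identity [E_τ, D] = -2E_τ holds. -/
open Filter Topology

lemma hasDerivAt_pdx {f : ℝ → ℝ → ℝ} (hf : Smooth2 f) (x t : ℝ) :
    HasDerivAt (fun y => f y t) (pdx f x t) x := by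
  have hF : Differentiable ℝ (fun p : ℝ × ℝ => f p.1 p.2) := hf.differentiable (by simp)
  have hd : DifferentiableAt ℝ (fun y => f y t) x :=
    by have := (hF (x, t)).comp x ((differentiableAt_id : DifferentiableAt ℝ (fun y : ℝ => y) x).prodMk (differentiableAt_const t)); exact this
  exact hd.hasDerivAt

lemma smooth2_pdx {f : ℝ → ℝ → ℝ} (hf : Smooth2 f) : Smooth2 (pdx f) := by
  have h1 : ContDiff ℝ (⊤ : ℕ∞) (fun p : ℝ × ℝ => fderiv ℝ (fun q : ℝ × ℝ => f q.1 q.2) p (1, 0)) :=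
    (hf.fderiv_right (by simp)).clm_apply contDiff_const
  have h2 : (fun p : ℝ × ℝ => pdx f p.1 p.2)
      = fun p : ℝ × ℝ => fderiv ℝ (fun q : ℝ × ℝ => f q.1 q.2) p (1, 0) := by
    funext p
    have hF : DifferentiableAt ℝ (fun q : ℝ × ℝ => f q.1 q.2) (p.1, p.2) :=
      hf.differentiable (by simp) (p.1, p.2)
    have hcomp := hF.hasFDerivAt.comp_hasDerivAt p.1
      (HasDerivAt.prodMk (hasDerivAt_id p.1) (hasDerivAt_const p.1 p.2))
    have : HasDerivAt (fun y => f y p.2)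
        (fderiv ℝ (fun q : ℝ × ℝ => f q.1 q.2) (p.1, p.2) (1, 0)) p.1 := by
      exact hcomp
    simpa [pdx] using this.deriv
  unfold Smooth2
  rw [h2]
  exact h1

lemma pdx_opDt (τ : ℝ) {f : ℝ → ℝ → ℝ} (hf : Smooth2 f) (x t : ℝ) :
    pdx (opDt τ f) x t
      = -pdx f x t - x * pdx (pdx f) x t
        - t * ((pdx f x t - pdx f x (t - τ)) / τ) := by
  have ha := ((hasDerivAt_id x).neg).mul (hasDerivAt_pdx (smooth2_pdx hf) x t)
  have hb := (((hasDerivAt_pdx hf x t).sub (hasDerivAt_pdx hf x (t - τ))).div_const τ).const_mul t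
  have h := ha.sub hb
  have h2 : HasDerivAt (fun y => -y * pdx f y t - t * ((f y t - f y (t - τ)) / τ))
      (-pdx f x t - x * pdx (pdx f) x t - t * ((pdx f x t - pdx f x (t - τ)) / τ)) x := by
    refine h.congr_deriv ?_
    simp only [Pi.neg_apply, id_eq]
    ring
  simpa [pdx, opDt] using h2.deriv

lemma pdx2_opDt (τ : ℝ) {f : ℝ → ℝ → ℝ} (hf : Smooth2 f) (x t : ℝ) :
    pdx (pdx (opDt τ f)) x t
      = -2 * pdx (pdx f) x t - x * pdx (pdx (pdx f)) x t
        - t * ((pdx (pdx f) x t - pdx (pdx f) x (t - τ)) / τ) := by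
  have hg := smooth2_pdx hf
  have hg2 := smooth2_pdx hg
  have hfun : (fun y => pdx (opDt τ f) y t)
      = fun y => -pdx f y t - y * pdx (pdx f) y t - t * ((pdx f y t - pdx f y (t - τ)) / τ) :=
    funext fun y => pdx_opDt τ hf y t
  have ha := ((hasDerivAt_pdx hg x t).neg).sub
    (((hasDerivAt_id x).mul (hasDerivAt_pdx hg2 x t)))
  have hb := (((hasDerivAt_pdx hg x t).sub (hasDerivAt_pdx hg x (t - τ))).div_const τ).const_mul t
  have h := ha.sub hb
  have h2 : HasDerivAt
      (fun y => -pdx f y t - y * pdx (pdx f) y t - t * ((pdx f y t - pdx f y (t - τ)) / τ))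
      (-2 * pdx (pdx f) x t - x * pdx (pdx (pdx f)) x t
        - t * ((pdx (pdx f) x t - pdx (pdx f) x (t - τ)) / τ)) x := by
    refine h.congr_deriv ?_
    simp only [Pi.neg_apply, id_eq]
    ring
  have : pdx (pdx (opDt τ f)) x t = deriv (fun y => pdx (opDt τ f) y t) x := rfl
  rw [this, hfun]
  exact h2.deriv

lemma pdx_opEt (τ : ℝ) {f : ℝ → ℝ → ℝ} (hf : Smooth2 f) (x t : ℝ) :
    pdx (opEt τ f) x t
      = pdx (pdx (pdx f)) x t
        - (pdx f x (t + 2 * τ) - 2 * pdx f x (t + τ) + pdx f x t) / τ ^ 2 := by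
  have hg2 := smooth2_pdx (smooth2_pdx hf)
  have ha := hasDerivAt_pdx hg2 x t
  have hb := ((((hasDerivAt_pdx hf x (t + 2 * τ)).sub
      ((hasDerivAt_pdx hf x (t + τ)).const_mul 2)).add
      (hasDerivAt_pdx hf x t)).div_const (τ ^ 2))
  have h := ha.sub hb
  exact h.deriv

/-- [E_τ, D_τ] = -2 E_τ for D_τ = -x∂_x - t(1-e^{-τ∂_t})/τ. -/
theorem discrete_wave_D_commutator (τ : ℝ) (hτ : τ ≠ 0) (f : ℝ → ℝ → ℝ) (hf : Smooth2 f) :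
    opEt τ (opDt τ f) - opDt τ (opEt τ f) = fun x t => -2 * opEt τ f x t := by
  funext x t
  simp only [Pi.sub_apply]
  have e1 : t - τ + 2 * τ = t + τ := by ring
  have e2 : t - τ + τ = t := by ring
  have e3 : t + 2 * τ - τ = t + τ := by ring
  have e4 : t + τ - τ = t := by ring
  rw [show opEt τ (opDt τ f) x t
      = pdx (pdx (opDt τ f)) x t
        - (opDt τ f x (t + 2 * τ) - 2 * opDt τ f x (t + τ) + opDt τ f x t) / τ ^ 2 from rfl,
    show opDt τ (opEt τ f) x t
      = -x * pdx (opEt τ f) x t - t * ((opEt τ f x t - opEt τ f x (t - τ)) / τ) from rfl,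
    pdx2_opDt τ hf, pdx_opEt τ hf]
  simp only [opDt, opEt, e1, e2, e3, e4]
  field_simp
  ring
end

section
/- In U_τ(iso(2,1)), the coproduct Δ(C2)=1⊗C2+C2⊗e^{-τH}+2τD⊗e^{-τH}K is coassociative: (Δ⊗id)(Δ(C2)) = (id⊗Δ)(Δ(C2)), given Δ(H)=1⊗H+H⊗1, Δ(D)=1⊗D+D⊗e^{-τH}, Δ(K)=1⊗K+K⊗1. -/
/-!
Writing Δ(C₂) = 1 ⊗ C₂ + C₂ ⊗ g + u with g = e^{-τH} group-like, the two iterated coproducts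
of C₂ agree exactly when the correction term u satisfies the cocycle condition
(Δ ⊗ id) u + u ⊗ g = (id ⊗ Δ) u + 1 ⊗ u. For u = D ⊗ gK both sides equal
1 ⊗ D ⊗ gK + D ⊗ g ⊗ gK + D ⊗ gK ⊗ g, because D is (1, g)-skew-primitive, g is group-like and
K is primitive.
-/

open scoped TensorProduct

open Algebra.TensorProduct (assoc map)

namespace Uiso21

variable {R A : Type*} [CommRing R] [Ring A] [Algebra R A]

def IsSkewCocycle (Δ : A →ₐ[R] A ⊗[R] A) (g : A) (u : A ⊗[R] A) : Prop :=
  assoc R R R A A A (map Δ (AlgHom.id R A) u) + assoc R R R A A A (u ⊗ₜ[R] g)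
    = map (AlgHom.id R A) Δ u + 1 ⊗ₜ[R] u

variable {Δ : A →ₐ[R] A ⊗[R] A} {g : A}

theorem IsSkewCocycle.smul {u : A ⊗[R] A} (hu : IsSkewCocycle Δ g u) (c : R) :
    IsSkewCocycle Δ g (c • u) := by
  unfold IsSkewCocycle at hu ⊢
  simp only [map_smul, ← TensorProduct.smul_tmul', TensorProduct.tmul_smul, ← smul_add, hu]

theorem isSkewCocycle_tmul_mul {D K : A}
    (hg : Δ g = g ⊗ₜ[R] g)
    (hD : Δ D = 1 ⊗ₜ[R] D + D ⊗ₜ[R] g)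
    (hK : Δ K = 1 ⊗ₜ[R] K + K ⊗ₜ[R] 1) :
    IsSkewCocycle Δ g (D ⊗ₜ[R] (g * K)) := by
  simp only [IsSkewCocycle, Algebra.TensorProduct.map_tmul, AlgHom.id_apply, map_mul, hg, hD, hK,
    mul_add, Algebra.TensorProduct.tmul_mul_tmul, mul_one, TensorProduct.add_tmul,
    TensorProduct.tmul_add, map_add, Algebra.TensorProduct.assoc_tmul]
  abel

theorem coassoc_of_eq_one_tmul_add_tmul_add {x : A} {u : A ⊗[R] A}
    (hg : Δ g = g ⊗ₜ[R] g)
    (hx : Δ x = 1 ⊗ₜ[R] x + x ⊗ₜ[R] g + u)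
    (hu : IsSkewCocycle Δ g u) :
    assoc R R R A A A (map Δ (AlgHom.id R A) (Δ x)) = map (AlgHom.id R A) Δ (Δ x) := by
  unfold IsSkewCocycle at hu
  rw [hx]
  simp only [map_add, Algebra.TensorProduct.map_tmul, AlgHom.id_apply, map_one, hx, hg,
    TensorProduct.add_tmul, Algebra.TensorProduct.assoc_tmul, TensorProduct.tmul_add,
    Algebra.TensorProduct.one_def]
  linear_combination (norm := abel) hu

end Uiso21

theorem Uiso21_coproduct_C2_coassociative_general
    (A : Type*) [Ring A] [Algebra ℝ A] (τ : ℝ)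
    (D K C2 Em : A)
    (Δ : A →ₐ[ℝ] A ⊗[ℝ] A)
    (hΔD : Δ D = 1 ⊗ₜ[ℝ] D + D ⊗ₜ[ℝ] Em)
    (hΔK : Δ K = 1 ⊗ₜ[ℝ] K + K ⊗ₜ[ℝ] 1)
    (hΔC2 : Δ C2 = 1 ⊗ₜ[ℝ] C2 + C2 ⊗ₜ[ℝ] Em + (2 * τ) • (D ⊗ₜ[ℝ] (Em * K)))
    (hΔEm : Δ Em = Em ⊗ₜ[ℝ] Em) :
    (Algebra.TensorProduct.assoc ℝ ℝ ℝ A A A)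
        ((Algebra.TensorProduct.map Δ (AlgHom.id ℝ A)) (Δ C2))
      = (Algebra.TensorProduct.map (AlgHom.id ℝ A) Δ) (Δ C2) :=
  Uiso21.coassoc_of_eq_one_tmul_add_tmul_add hΔEm hΔC2
    ((Uiso21.isSkewCocycle_tmul_mul hΔEm hΔD hΔK).smul (2 * τ))

/-- Coassociativity of Δ(C2) = 1⊗C2 + C2⊗e^{-τH} + 2τD⊗e^{-τH}K in U_τ(iso(2,1)).
We work in an associative ℝ-algebra A with generators H, D, K, C2 satisfying the
U_τ(iso(2,1)) relations (with the τ-divided one in multiplied form), Em playing the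
role of e^{-τH}, and Δ an algebra homomorphism with the stated values on the
generators and Δ(e^{-τH}) = e^{-τH}⊗e^{-τH}.  Then
(Δ⊗id)(Δ(C2)) = (id⊗Δ)(Δ(C2)). -/
theorem Uiso21_coproduct_C2_coassociative
    (A : Type*) [Ring A] [Algebra ℝ A] (τ : ℝ)
    (H D K C2 Em : A)
    (hHEm : H * Em = Em * H)
    (hDH : τ • (D * H - H * D) = 1 - Em)
    (hKH : K * H - H * K = 0)
    (hKD : K * D - D * K = 0)
    (hDC2 : D * C2 - C2 * D = -C2)
    (hHC2 : H * C2 - C2 * H = (2 : ℝ) • (Em * K))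
    (Δ : A →ₐ[ℝ] A ⊗[ℝ] A)
    (hΔH : Δ H = 1 ⊗ₜ[ℝ] H + H ⊗ₜ[ℝ] 1)
    (hΔD : Δ D = 1 ⊗ₜ[ℝ] D + D ⊗ₜ[ℝ] Em)
    (hΔK : Δ K = 1 ⊗ₜ[ℝ] K + K ⊗ₜ[ℝ] 1)
    (hΔC2 : Δ C2 = 1 ⊗ₜ[ℝ] C2 + C2 ⊗ₜ[ℝ] Em + (2 * τ) • (D ⊗ₜ[ℝ] (Em * K)))
    (hΔEm : Δ Em = Em ⊗ₜ[ℝ] Em) :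
    (Algebra.TensorProduct.assoc ℝ ℝ ℝ A A A)
        ((Algebra.TensorProduct.map Δ (AlgHom.id ℝ A)) (Δ C2))
      = (Algebra.TensorProduct.map (AlgHom.id ℝ A) Δ) (Δ C2) :=
  Uiso21_coproduct_C2_coassociative_general A τ D K C2 Em Δ hΔD hΔK hΔC2 hΔEm
end
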